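/- arXiv:2407.18016 — 3 statements merged into one kernel-verified Lean document; each statement's English description precedes it below -/
import Mathlib

section
/- Let a, b > 0 and f : [0,∞) → [0,1] be continuous. Let y : [-1,∞) → [0,∞) be continuous, differentiable on (0,∞), satisfying y'(t) = −a y(t) + b f(y(t−1)) for all t > 0. If y(0) < b/a, then y(t) < b/a for all t ≥ 0. -/
/-!
The forcing term `b * f (y (t - 1))` never exceeds `b`, so `y' ≤ -a y + b` on `(0, ∞)`.
Multiplying by the integrating factor `exp (a t)`, the function `exp (a t) * (y t - b / a)` is
antitone on `[0, ∞)`; being negative at `0`, it stays negative.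
-/

open Real Set

section LinearComparison

variable {a c : ℝ} {y u : ℝ → ℝ}

theorem hasDerivAt_exp_mul_sub_div (ha : a ≠ 0) {t w : ℝ}
    (hy : HasDerivAt y (-a * y t + w) t) :
    HasDerivAt (fun s => exp (a * s) * (y s - c / a)) (exp (a * t) * (w - c)) t := by
  have hexp : HasDerivAt (fun s => exp (a * s)) (exp (a * t) * a) t :=
    ((hasDerivAt_id t).const_mul a).exp.congr_deriv (by rw [id, mul_one])
  refine (hexp.mul (hy.sub_const (c / a))).congr_deriv ?_
  field_simp
  ring

theorem antitoneOn_exp_mul_sub_div (ha : a ≠ 0) (hy_cont : ContinuousOn y (Ici 0))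
    (hy_deriv : ∀ t, 0 < t → HasDerivAt y (-a * y t + u t) t) (hu : ∀ t, 0 < t → u t ≤ c) :
    AntitoneOn (fun s => exp (a * s) * (y s - c / a)) (Ici 0) := by
  refine antitoneOn_of_hasDerivWithinAt_nonpos (convex_Ici 0)
    (((continuous_const.mul continuous_id).rexp.continuousOn).mul
      (hy_cont.sub continuousOn_const))
    (fun t ht => ?_) (fun t ht => ?_)
    (f' := fun t => exp (a * t) * (u t - c))
  all_goals rw [interior_Ici] at ht
  · exact (hasDerivAt_exp_mul_sub_div ha (hy_deriv t ht)).hasDerivWithinAt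
  · exact mul_nonpos_of_nonneg_of_nonpos (exp_pos _).le (sub_nonpos.2 (hu t ht))

theorem lt_div_of_hasDerivAt_le (ha : a ≠ 0) (hy_cont : ContinuousOn y (Ici 0))
    (hy_deriv : ∀ t, 0 < t → HasDerivAt y (-a * y t + u t) t) (hu : ∀ t, 0 < t → u t ≤ c)
    (hy0 : y 0 < c / a) {t : ℝ} (ht : 0 ≤ t) : y t < c / a := by
  have hmono := antitoneOn_exp_mul_sub_div ha hy_cont hy_deriv hu self_mem_Ici ht ht
  have hneg : exp (a * t) * (y t - c / a) < 0 := by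
    simp only [mul_zero, exp_zero, one_mul] at hmono
    linarith
  linarith [neg_of_mul_neg_right hneg (exp_pos _).le]

end LinearComparison

theorem solution_bounded_general (a b : ℝ) (f : ℝ → ℝ) (y : ℝ → ℝ)
    (ha : 0 < a) (hb : 0 < b)
    (hf_range : ∀ ξ : ℝ, 0 ≤ ξ → f ξ ∈ Set.Icc (0:ℝ) 1)
    (hy_nonneg : ∀ t : ℝ, -1 ≤ t → 0 ≤ y t)
    (hy_cont : ContinuousOn y (Set.Ici (-1)))
    (hy_deriv : ∀ t : ℝ, 0 < t → HasDerivAt y (-a * y t + b * f (y (t - 1))) t)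
    (hy0 : y 0 < b / a) :
    ∀ t : ℝ, 0 ≤ t → y t < b / a := by
  have hforcing : ∀ t, 0 < t → b * f (y (t - 1)) ≤ b := fun t ht =>
    mul_le_of_le_one_right hb.le (hf_range _ (hy_nonneg _ (by linarith))).2
  exact fun t ht => lt_div_of_hasDerivAt_le ha.ne'
    (hy_cont.mono (Ici_subset_Ici.2 (by norm_num))) hy_deriv hforcing hy0 ht

theorem solution_bounded (a b : ℝ) (f : ℝ → ℝ) (y : ℝ → ℝ)
    (ha : 0 < a) (hb : 0 < b)
    (hf_cont : ContinuousOn f (Set.Ici 0))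
    (hf_range : ∀ ξ : ℝ, 0 ≤ ξ → f ξ ∈ Set.Icc (0:ℝ) 1)
    (hy_nonneg : ∀ t : ℝ, -1 ≤ t → 0 ≤ y t)
    (hy_cont : ContinuousOn y (Set.Ici (-1)))
    (hy_deriv : ∀ t : ℝ, 0 < t → HasDerivAt y (-a * y t + b * f (y (t - 1))) t)
    (hy0 : y 0 < b / a) :
    ∀ t : ℝ, 0 ≤ t → y t < b / a :=
  solution_bounded_general a b f y ha hb hf_range hy_nonneg hy_cont hy_deriv hy0
end

section
/- Let c > 0, d > 0 with d·g(e^{-c}) > c, where g satisfies: g : [0,∞) → [0,1], g increasing on [0,1), g(ξ) = 0 for ξ > 1. Let p : ℝ → (0,∞) be a periodic solution of x'(t) = −c x(t) + d g(x(t−1)) (in the integrated sense) with p(0) = 1 and p(t) > 1 for all t ∈ [−1, 0). Then p(t) ≥ e^{-c} for all t ∈ ℝ. -/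
/-!
Suppose `p ≥ exp (-c)` on `[0, T]` and let `τ` be the last time in `[0, T]` with `p τ ≥ 1`.
If `T < τ + 1`, then `p s ≥ exp (-c (s - τ)) p τ ≥ exp (-c)` up to `τ + 1`, since `g ≥ 0`.
Otherwise the delayed values `p (s - 1)` for `s ∈ (T, T + 1]` lie in `[exp (-c), 1)`, where
`g ≥ g (exp (-c)) > c / d`, so the forcing outweighs the decay up to `T + 1`.
Continuous induction gives the bound on `[0, ∞)`, and periodicity on all of `ℝ`.
-/

open Real Set

/-- The delay equation `x' = -c x + d g (x (t - 1))` in variation-of-constants form on `[0, ∞)`. -/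
def IsIntegralSolution (c d : ℝ) (g p : ℝ → ℝ) : Prop :=
  ∀ τ t : ℝ, 0 ≤ τ → τ < t →
    p t = exp (-c * (t - τ)) * p τ + d * ∫ s in τ..t, exp (-c * (t - s)) * g (p (s - 1))

theorem Ici_subset_of_forall_Icc_subset_exists_gt {α : Type*} [ConditionallyCompleteLinearOrder α]
    [TopologicalSpace α] [OrderTopology α] [DenselyOrdered α] {K : Set α} {a : α}
    (hK : IsClosed K) (ha : a ∈ K)
    (hstep : ∀ T, a ≤ T → Icc a T ⊆ K → ∃ T' > T, Icc a T' ⊆ K) : Ici a ⊆ K := by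
  intro t ht
  by_contra htK
  set B := Ici a ∩ Kᶜ
  have hB : B.Nonempty := ⟨t, ht, htK⟩
  have ha_le : a ≤ sInf B := le_csInf hB fun _ hb => hb.1
  have hIco : Ico a (sInf B) ⊆ K := fun u hu => by
    by_contra huK
    exact (csInf_le (⟨a, fun _ hb => hb.1⟩ : BddBelow B) ⟨hu.1, huK⟩).not_gt hu.2
  have hIcc : Icc a (sInf B) ⊆ K := by
    rcases ha_le.eq_or_lt with heq | hlt
    · simpa [← heq] using ha
    · rw [← closure_Ico hlt.ne]
      exact hK.closure_subset_iff.mpr hIco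
  obtain ⟨T', hT', hT'K⟩ := hstep _ ha_le hIcc
  obtain ⟨b, hb, hbT'⟩ := exists_lt_of_csInf_lt hB hT'
  exact hb.2 (hT'K ⟨hb.1, hbT'.le⟩)

theorem integral_exp_neg_mul_sub {c : ℝ} (hc : c ≠ 0) (a b : ℝ) :
    ∫ u in a..b, exp (-c * (b - u)) = (1 - exp (-c * (b - a))) / c := by
  have h : (fun u => exp (-c * (b - u))) = fun u => exp (c * u - c * b) := by
    funext u; ring_nf
  rw [h, intervalIntegral.integral_comp_mul_sub (f := exp) hc, integral_exp, smul_eq_mul,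
    sub_self, exp_zero, inv_mul_eq_div]
  ring_nf

namespace IsIntegralSolution

variable {c d : ℝ} {g p : ℝ → ℝ}

theorem exp_mul_le (hp : IsIntegralSolution c d g p) (hd : 0 ≤ d) (hg : ∀ s, 0 ≤ g (p s))
    {τ t : ℝ} (hτ : 0 ≤ τ) (hτt : τ < t) : exp (-c * (t - τ)) * p τ ≤ p t := by
  rw [hp τ t hτ hτt, le_add_iff_nonneg_right]
  exact mul_nonneg hd <| intervalIntegral.integral_nonneg hτt.le
    fun s _ => mul_nonneg (exp_nonneg _) (hg _)

theorem le_of_forcing_ge (hp : IsIntegralSolution c d g p) (hc : 0 < c) (hd : 0 ≤ d)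
    {m G a b : ℝ} (ha : 0 ≤ a) (hab : a < b)
    (hint : IntervalIntegrable (fun u => exp (-c * (b - u)) * g (p (u - 1)))
      MeasureTheory.volume a b)
    (hm : m ≤ 1) (hpa : m ≤ p a) (hG : ∀ u ∈ Ioo a b, G ≤ g (p (u - 1))) (hdG : c ≤ d * G) :
    m ≤ p b := by
  set E := exp (-c * (b - a))
  set K := (1 - E) / c
  have hE0 : 0 ≤ E := (exp_pos _).le
  have hE1 : E ≤ 1 := exp_le_one_iff.mpr (by nlinarith)
  have hK : 0 ≤ K := div_nonneg (by linarith) hc.le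
  have hcK : c * K = 1 - E := mul_div_cancel₀ _ hc.ne'
  have hI : G * K ≤ ∫ u in a..b, exp (-c * (b - u)) * g (p (u - 1)) := by
    calc G * K = ∫ u in a..b, exp (-c * (b - u)) * G := by
          rw [intervalIntegral.integral_mul_const, integral_exp_neg_mul_sub hc.ne', mul_comm]
      _ ≤ _ := intervalIntegral.integral_mono_on_of_le_Ioo hab.le
          ((by fun_prop : Continuous fun u => exp (-c * (b - u)) * G).intervalIntegrable a b) hint
          fun u hu => mul_le_mul_of_nonneg_left (hG u hu) (exp_nonneg _)
  rw [hp a b ha hab]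
  calc m ≤ E * m + c * K := by nlinarith
    _ ≤ E * p a + d * G * K := by gcongr
    _ ≤ E * p a + d * ∫ u in a..b, exp (-c * (b - u)) * g (p (u - 1)) := by
        rw [mul_assoc]; gcongr

theorem exists_gt_Icc_subset_setOf_exp_neg_le (hp : IsIntegralSolution c d g p) (hc : 0 < c)
    (hd : 0 ≤ d) (hg_nonneg : ∀ ξ, 0 ≤ ξ → 0 ≤ g ξ) (hg_mono : MonotoneOn g (Ico 0 1))
    (hkey : c < d * g (exp (-c))) (hp_nonneg : ∀ t, 0 ≤ p t) (hp_cont : Continuous p)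
    (hp_int : ∀ τ t : ℝ, 0 ≤ τ → τ < t →
      IntervalIntegrable (fun s => exp (-c * (t - s)) * g (p (s - 1))) MeasureTheory.volume τ t)
    (hp0 : 1 ≤ p 0) {T : ℝ} (hT : 0 ≤ T) (hTm : Icc 0 T ⊆ {t | exp (-c) ≤ p t}) :
    ∃ T' > T, Icc 0 T' ⊆ {t | exp (-c) ≤ p t} := by
  have hm1 : exp (-c) < 1 := exp_lt_one_iff.mpr (neg_lt_zero.mpr hc)
  obtain ⟨τ, ⟨⟨hτ0, hτT⟩, hpτ⟩, hτmax⟩ :=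
    (isCompact_Icc.inter_right (isClosed_le continuous_const hp_cont)).exists_isGreatest
      (⟨0, ⟨le_rfl, hT⟩, hp0⟩ : (Icc 0 T ∩ {u | 1 ≤ p u}).Nonempty)
  have hlt1 : ∀ u ∈ Ioc τ T, p u < 1 := fun u hu =>
    lt_of_not_ge fun h => (hτmax ⟨⟨hτ0.trans hu.1.le, hu.2⟩, h⟩).not_gt hu.1
  rcases lt_or_ge T (τ + 1) with hT_lt | hT_ge
  · refine ⟨τ + 1, hT_lt, ?_⟩
    rw [← Icc_union_Ioc_eq_Icc hT hT_lt.le]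
    refine union_subset hTm fun s hs => ?_
    have hτs : τ < s := hτT.trans_lt hs.1
    calc exp (-c) ≤ exp (-c * (s - τ)) * 1 := by
          rw [mul_one]; exact exp_le_exp.mpr (by nlinarith [hs.2])
      _ ≤ exp (-c * (s - τ)) * p τ := by gcongr; exact hpτ
      _ ≤ p s := hp.exp_mul_le hd (fun s => hg_nonneg _ (hp_nonneg s)) hτ0 hτs
  · refine ⟨T + 1, by linarith, ?_⟩
    rw [← Icc_union_Ioc_eq_Icc hT (by linarith)]
    refine union_subset hTm fun s hs => ?_
    refine hp.le_of_forcing_ge hc hd hT hs.1 (hp_int T s hT hs.1) hm1.le (hTm ⟨hT, le_rfl⟩)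
      (fun u hu => ?_) hkey.le
    have hu : u - 1 ∈ Ioc τ T := ⟨by linarith [hu.1], by linarith [hu.2, hs.2]⟩
    exact hg_mono ⟨(exp_pos _).le, hm1⟩ ⟨hp_nonneg _, hlt1 _ hu⟩ (hTm ⟨by linarith [hu.1], hu.2⟩)

end IsIntegralSolution

theorem periodic_solution_lower_bound_general (c d : ℝ) (g p : ℝ → ℝ)
    (hc : 0 < c) (hd : 0 < d)
    (hg_range : ∀ ξ : ℝ, 0 ≤ ξ → g ξ ∈ Set.Icc (0:ℝ) 1)
    (hg_mono : MonotoneOn g (Set.Ico (0:ℝ) 1))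
    (hkey : c < d * g (Real.exp (-c)))
    (hp_pos : ∀ t : ℝ, 0 < p t)
    (hp_per : ∃ ω : ℝ, 0 < ω ∧ ∀ t : ℝ, p (t + ω) = p t)
    (hp_cont : Continuous p)
    (hp_int : ∀ τ t : ℝ, 0 ≤ τ → τ < t →
      IntervalIntegrable (fun s => Real.exp (-c * (t - s)) * g (p (s - 1))) MeasureTheory.volume τ t)
    (hp_eq : ∀ τ t : ℝ, 0 ≤ τ → τ < t →
      p t = Real.exp (-c * (t - τ)) * p τ +
        d * ∫ s in τ..t, Real.exp (-c * (t - s)) * g (p (s - 1)))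
    (hp0 : p 0 = 1) :
    ∀ t : ℝ, Real.exp (-c) ≤ p t := by
  obtain ⟨ω, hω, hper⟩ := hp_per
  have hsol : IsIntegralSolution c d g p := hp_eq
  have hp_nonneg : ∀ t, 0 ≤ p t := fun t => (hp_pos t).le
  have hforward : Ici 0 ⊆ {t | exp (-c) ≤ p t} :=
    Ici_subset_of_forall_Icc_subset_exists_gt (isClosed_le continuous_const hp_cont)
      (by simpa [hp0] using hc.le) fun _ hT hTm =>
        hsol.exists_gt_Icc_subset_setOf_exp_neg_le hc hd.le (fun ξ hξ => (hg_range ξ hξ).1)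
          hg_mono hkey hp_nonneg hp_cont hp_int hp0.ge hT hTm
  intro t
  obtain ⟨y, hy, hty⟩ := Function.Periodic.exists_mem_Ico₀ hper hω t
  exact hty ▸ hforward hy.1

theorem periodic_solution_lower_bound (c d : ℝ) (g p : ℝ → ℝ)
    (hc : 0 < c) (hd : 0 < d)
    (hg_range : ∀ ξ : ℝ, 0 ≤ ξ → g ξ ∈ Set.Icc (0:ℝ) 1)
    (hg_mono : MonotoneOn g (Set.Ico (0:ℝ) 1))
    (hg_zero : ∀ ξ : ℝ, 1 < ξ → g ξ = 0)
    (hkey : c < d * g (Real.exp (-c)))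
    (hp_pos : ∀ t : ℝ, 0 < p t)
    (hp_per : ∃ ω : ℝ, 0 < ω ∧ ∀ t : ℝ, p (t + ω) = p t)
    (hp_cont : Continuous p)
    (hp_int : ∀ τ t : ℝ, 0 ≤ τ → τ < t →
      IntervalIntegrable (fun s => Real.exp (-c * (t - s)) * g (p (s - 1))) MeasureTheory.volume τ t)
    (hp_eq : ∀ τ t : ℝ, 0 ≤ τ → τ < t →
      p t = Real.exp (-c * (t - τ)) * p τ +
        d * ∫ s in τ..t, Real.exp (-c * (t - s)) * g (p (s - 1)))
    (hp0 : p 0 = 1)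
    (hp_init : ∀ t ∈ Set.Ico (-1 : ℝ) 0, 1 < p t) :
    ∀ t : ℝ, Real.exp (-c) ≤ p t :=
  periodic_solution_lower_bound_general c d g p hc hd hg_range hg_mono hkey hp_pos hp_per hp_cont
    hp_int hp_eq hp0
end

section
/- Let c > 0, d > 0, and g satisfy condition (G), with d > c/g(e^{-c}). Let x solve x'(t) = −c x(t) + d g(x(t−1)) on (1,2) with x(t) = e^{-ct} on [0,1]. Then for every t ∈ (1,2), x'(t) > −c x(t) + c; in particular if x(t) = 1 for some t ∈ (1,2), then x'(t) > 0, so there is at most one t₀ ∈ (1,2) with x(t₀) = 1. -/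
open Real

theorem at_most_one_crossing (c d : ℝ) (g x x' : ℝ → ℝ)
    (hc : 0 < c) (hd : 0 < d)
    (hg_range : ∀ ξ : ℝ, 0 ≤ ξ → g ξ ∈ Set.Icc (0:ℝ) 1)
    (hg_mono : StrictMonoOn g (Set.Ico (0:ℝ) 1))
    (hg0 : g 0 = 0)
    (hg_zero : ∀ ξ : ℝ, 1 < ξ → g ξ = 0)
    (hkey : c < d * g (Real.exp (-c)))
    (hx_init : ∀ t ∈ Set.Icc (0:ℝ) 1, x t = Real.exp (-c * t))
    (hx_deriv : ∀ t ∈ Set.Ioo (1:ℝ) 2,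
      HasDerivAt x (x' t) t ∧ x' t = -c * x t + d * g (x (t - 1))) :
    (∀ t ∈ Set.Ioo (1:ℝ) 2, -c * x t + c < x' t) ∧
    (∀ t ∈ Set.Ioo (1:ℝ) 2, x t = 1 → 0 < x' t) ∧
    (∀ t₁ ∈ Set.Ioo (1:ℝ) 2, ∀ t₂ ∈ Set.Ioo (1:ℝ) 2, x t₁ = 1 → x t₂ = 1 → t₁ = t₂) := by
  have hpart1 : ∀ t ∈ Set.Ioo (1:ℝ) 2, -c * x t + c < x' t := by
    intro t ht
    obtain ⟨hder, heq⟩ := hx_deriv t ht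
    have ht1 : t - 1 ∈ Set.Icc (0:ℝ) 1 := ⟨by linarith [ht.1], by linarith [ht.2]⟩
    have hxval : x (t - 1) = Real.exp (-c * (t - 1)) := hx_init _ ht1
    have hab : Real.exp (-c) < Real.exp (-c * (t - 1)) := by
      apply Real.exp_lt_exp.mpr; nlinarith [ht.1, ht.2]
    have hb1 : Real.exp (-c * (t - 1)) < 1 := by
      rw [Real.exp_lt_one_iff]; nlinarith [ht.1]
    have ha0 : (0:ℝ) ≤ Real.exp (-c) := le_of_lt (Real.exp_pos _)
    have ha1 : Real.exp (-c) < 1 := by rw [Real.exp_lt_one_iff]; linarith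
    have hb0 : (0:ℝ) ≤ Real.exp (-c * (t - 1)) := le_of_lt (Real.exp_pos _)
    have hg_lt : g (Real.exp (-c)) < g (Real.exp (-c * (t - 1))) :=
      hg_mono ⟨ha0, ha1⟩ ⟨hb0, hb1⟩ hab
    have : c < d * g (x (t - 1)) := by
      rw [hxval]
      calc c < d * g (Real.exp (-c)) := hkey
        _ < d * g (Real.exp (-c * (t - 1))) := by
            exact mul_lt_mul_of_pos_left hg_lt hd
    linarith [heq, this]
  have hpart2 : ∀ t ∈ Set.Ioo (1:ℝ) 2, x t = 1 → 0 < x' t := by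
    intro t ht hxt
    have := hpart1 t ht
    rw [hxt] at this; linarith
  refine ⟨hpart1, hpart2, ?_⟩
  -- uniqueness
  have key : ∀ t₁ ∈ Set.Ioo (1:ℝ) 2, ∀ t₂ ∈ Set.Ioo (1:ℝ) 2, t₁ < t₂ →
      x t₁ = 1 → x t₂ = 1 → False := by
    intro t₁ ht₁ t₂ ht₂ hlt hx₁ hx₂
    -- continuity of x on [t₁, t₂]
    have hsub : Set.Icc t₁ t₂ ⊆ Set.Ioo (1:ℝ) 2 := fun s hs =>
      ⟨lt_of_lt_of_le ht₁.1 hs.1, lt_of_le_of_lt hs.2 ht₂.2⟩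
    have hcont : ContinuousOn x (Set.Icc t₁ t₂) := fun s hs =>
      ((hx_deriv s (hsub hs)).1.differentiableAt.continuousAt).continuousWithinAt
    -- find s ∈ (t₁, t₂) with x s < 1 using x' t₂ > 0
    have hder₂ : HasDerivAt x (x' t₂) t₂ := (hx_deriv t₂ ht₂).1
    have hpos₂ : 0 < x' t₂ := hpart2 t₂ ht₂ hx₂
    have hslope : Filter.Tendsto (slope x t₂) (nhdsWithin t₂ {t₂}ᶜ) (nhds (x' t₂)) :=
      hasDerivAt_iff_tendsto_slope.mp hder₂
    have hslope' : Filter.Tendsto (slope x t₂) (nhdsWithin t₂ (Set.Iio t₂)) (nhds (x' t₂)) :=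
      hslope.mono_left (nhdsWithin_mono _ (fun s hs => ne_of_lt hs))
    have hev : ∀ᶠ s in nhdsWithin t₂ (Set.Iio t₂), 0 < slope x t₂ s :=
      hslope' (Ioi_mem_nhds hpos₂)
    have hev2 : ∀ᶠ s in nhdsWithin t₂ (Set.Iio t₂), s ∈ Set.Ioo t₁ t₂ :=
      Ioo_mem_nhdsLT_of_mem (Set.mem_Ioc.mpr ⟨hlt, le_rfl⟩)
    obtain ⟨s, hs1, hs2⟩ := (hev.and hev2).exists
    have hxs : x s < 1 := by
      have hs_lt : s - t₂ < 0 := by linarith [hs2.2]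
      have : slope x t₂ s = (x s - 1) / (s - t₂) := by
        rw [slope_def_field, hx₂]
      rw [this] at hs1
      by_contra h
      push_neg at h
      have : (x s - 1) / (s - t₂) ≤ 0 := div_nonpos_of_nonneg_of_nonpos (by linarith) (by linarith)
      linarith
    -- take min of x on [t₁, t₂]
    obtain ⟨ξ, hξ_mem, hξ_min⟩ := (isCompact_Icc).exists_isMinOn (Set.nonempty_Icc.mpr hlt.le)
      hcont
    have hξs : x ξ ≤ x s := hξ_min ⟨hs2.1.le, hs2.2.le⟩
    have hξ_lt1 : x ξ < 1 := lt_of_le_of_lt hξs hxs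
    have hξ_ne1 : ξ ≠ t₁ := fun h => by rw [h, hx₁] at hξ_lt1; linarith
    have hξ_ne2 : ξ ≠ t₂ := fun h => by rw [h, hx₂] at hξ_lt1; linarith
    have hξ_in : ξ ∈ Set.Ioo t₁ t₂ :=
      ⟨lt_of_le_of_ne hξ_mem.1 (Ne.symm hξ_ne1), lt_of_le_of_ne hξ_mem.2 hξ_ne2⟩
    have hξ_Ioo : ξ ∈ Set.Ioo (1:ℝ) 2 := hsub hξ_mem
    have hlocmin : IsLocalMin x ξ :=
      hξ_min.isLocalMin (Icc_mem_nhds hξ_in.1 hξ_in.2)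
    have hzero : x' ξ = 0 := hlocmin.hasDerivAt_eq_zero (hx_deriv ξ hξ_Ioo).1
    have := hpart1 ξ hξ_Ioo
    rw [hzero] at this
    nlinarith
  intro t₁ ht₁ t₂ ht₂ hx₁ hx₂
  rcases lt_trichotomy t₁ t₂ with h | h | h
  · exact absurd (key t₁ ht₁ t₂ ht₂ h hx₁ hx₂) not_false
  · exact h
  · exact absurd (key t₂ ht₂ t₁ ht₁ h hx₂ hx₁) not_false
end
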